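/- Fix s ∈ ℂ with Re(s) > max(h, 0) and define A(z) := (1/Γ(z))·Σ_n Σ_{k≥1} ε_n·l_n·e^{−k·l_n·s}·(k·l_n)^{z−1} for z ∈ ℂ. Then A is an entire function of z, A(0) = 0, A′(0) = Σ_n Σ_{k≥1} ε_n·e^{−k·l_n·s}/k = −Σ_n ε_n·Log(1 − e^{−s·l_n}), and consequently exp(A′(0)) = ∏_n (1 − e^{−s·l_n})^{−ε_n}. -/

import Mathlib

/-! The growth bound `#{n | l n ≤ T} ≤ C e^{bT}`, valid for every `b > h`, makes
`∑_{n,k} e^{-b k l_n}` converge; as the lengths are bounded below, this series dominates the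
orbit series `F(z) = ∑ ε_n l_n e^{-k l_n s} (k l_n)^{z-1}` uniformly on vertical strips, so `F`
and `A = F / Γ` are entire. Since `1/Γ` vanishes at `0` with derivative `1`, `A'(0) = F(0)`,
the double series `∑ ε_n e^{-k l_n s} / k`. Summing over `k` first gives
`-ε_n log(1 - e^{-s l_n})` by the Taylor series of the logarithm, and exponentiating turns the
sum over `n` into the Euler product. -/

open Filter Topology

section Counting

variable {ι : Type*}

lemma exists_le_mul_exp_of_limsup_lt {N : ℝ → ℕ} (hN : Monotone N) {b : ℝ} (hb : 0 ≤ b)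
    (hbdd : IsBoundedUnder (· ≤ ·) atTop fun T => Real.log (N T) / T)
    (hlt : limsup (fun T => Real.log (N T) / T) atTop < b) :
    ∃ C, ∀ T, 0 ≤ T → (N T : ℝ) ≤ C * Real.exp (b * T) := by
  obtain ⟨T₀, hT₀⟩ := eventually_atTop.mp (eventually_lt_of_limsup_lt hlt hbdd)
  set T₁ := max T₀ 1
  refine ⟨max 1 (N T₁), fun T hT => ?_⟩
  have hexp : 1 ≤ Real.exp (b * T) := Real.one_le_exp (mul_nonneg hb hT)
  rcases le_total T₁ T with hT₁ | hT₁
  · have hTpos : 0 < T := lt_of_lt_of_le one_pos ((le_max_right _ _).trans hT₁)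
    have hlog : Real.log (N T) < b * T :=
      (div_lt_iff₀ hTpos).mp (hT₀ T ((le_max_left _ _).trans hT₁))
    rcases (N T).eq_zero_or_pos with h0 | hpos
    · rw [h0, Nat.cast_zero]; positivity
    · calc (N T : ℝ) ≤ Real.exp (b * T) :=
            (Real.log_le_iff_le_exp (by exact_mod_cast hpos)).mp hlog.le
        _ ≤ max 1 (N T₁ : ℝ) * Real.exp (b * T) :=
            le_mul_of_one_le_left (by positivity) (le_max_left _ _)
  · calc (N T : ℝ) ≤ N T₁ := by exact_mod_cast hN hT₁
      _ ≤ max 1 (N T₁ : ℝ) := le_max_right _ _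
      _ ≤ max 1 (N T₁ : ℝ) * Real.exp (b * T) := le_mul_of_one_le_right (by positivity) hexp

/-- Grouping the `i` according to `⌊l i⌋₊ = j` compares the series with `∑ C e^{b(j+1)} e^{-cj}`. -/
lemma summable_exp_neg_mul_of_ncard_le {l : ι → ℝ} (hl : ∀ i, 0 ≤ l i)
    (hfin : ∀ T, {i | l i ≤ T}.Finite) {b c C : ℝ} (hbc : b < c) (hc : 0 ≤ c)
    (hN : ∀ T, 0 ≤ T → ({i | l i ≤ T}.ncard : ℝ) ≤ C * Real.exp (b * T)) :
    Summable fun i => Real.exp (-c * l i) := by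
  classical
  set q := Real.exp (b - c)
  have hq : Summable fun j : ℕ => C * Real.exp b * q ^ j :=
    (summable_geometric_of_lt_one (Real.exp_pos _).le
      (Real.exp_lt_one_iff.mpr (by linarith))).mul_left _
  have hC : 0 ≤ C := by
    simpa using (Nat.cast_nonneg _).trans (hN 0 le_rfl)
  have hfiber (u : Finset ι) (j : ℕ) :
      ∑ i ∈ u with ⌊l i⌋₊ = j, Real.exp (-c * l i) ≤ C * Real.exp b * q ^ j := by
    have hcard : ((u.filter (⌊l ·⌋₊ = j)).card : ℝ) ≤ C * Real.exp (b * (j + 1)) := by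
      refine le_trans ?_ (hN _ (by positivity))
      rw [← Set.ncard_coe_finset]
      have hsub : (↑(u.filter (⌊l ·⌋₊ = j)) : Set ι) ⊆ {i | l i ≤ j + 1} := fun i hi => by
        simp only [Finset.coe_filter, Set.mem_ofPred_eq] at hi ⊢
        exact hi.2 ▸ (Nat.lt_floor_add_one (l i)).le
      exact_mod_cast Set.ncard_le_ncard hsub (hfin _)
    calc ∑ i ∈ u with ⌊l i⌋₊ = j, Real.exp (-c * l i)
        ≤ ∑ i ∈ u with ⌊l i⌋₊ = j, Real.exp (-c * j) := by
          refine Finset.sum_le_sum fun i hi => Real.exp_le_exp.mpr ?_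
          have hj : (j : ℝ) ≤ l i := (Finset.mem_filter.mp hi).2 ▸ Nat.floor_le (hl i)
          exact mul_le_mul_of_nonpos_left hj (neg_nonpos.mpr hc)
      _ = (u.filter (⌊l ·⌋₊ = j)).card * Real.exp (-c * j) := by
          rw [Finset.sum_const, nsmul_eq_mul]
      _ ≤ C * Real.exp (b * (j + 1)) * Real.exp (-c * j) := by gcongr
      _ = C * Real.exp b * q ^ j := by
          rw [← Real.exp_nat_mul, mul_assoc, mul_assoc, ← Real.exp_add, ← Real.exp_add]
          ring_nf
  refine summable_of_sum_le (c := ∑' j, C * Real.exp b * q ^ j)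
    (fun i => (Real.exp_pos _).le) fun u => ?_
  calc ∑ i ∈ u, Real.exp (-c * l i)
      = ∑ j ∈ u.image (⌊l ·⌋₊), ∑ i ∈ u with ⌊l i⌋₊ = j, Real.exp (-c * l i) :=
        (Finset.sum_fiberwise_of_maps_to (fun i hi => Finset.mem_image_of_mem _ hi) _).symm
    _ ≤ ∑ j ∈ u.image (⌊l ·⌋₊), C * Real.exp b * q ^ j :=
        Finset.sum_le_sum fun j _ => hfiber u j
    _ ≤ ∑' j, C * Real.exp b * q ^ j :=
        hq.sum_le_tsum _ fun j _ => by positivity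

lemma summable_prod_pow_succ {x : ι → ℝ} (hx : Summable x) (hx0 : ∀ i, 0 ≤ x i) {q : ℝ}
    (hq0 : 0 ≤ q) (hxq : ∀ i, x i ≤ q) (hq : q < 1) :
    Summable fun p : ι × ℕ => x p.1 ^ (p.2 + 1) := by
  refine Summable.of_nonneg_of_le (fun p => pow_nonneg (hx0 _) _) (fun p => ?_)
    (hx.mul_of_nonneg (summable_geometric_of_lt_one hq0 hq) hx0 fun k => pow_nonneg hq0 k)
  rw [pow_succ']
  exact mul_le_mul_of_nonneg_left (pow_le_pow_left₀ (hx0 _) (hxq _) _) (hx0 _)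

lemma tendsto_cofinite_atTop_of_finite_sublevel {l : ι → ℝ} (hfin : ∀ T, {i | l i ≤ T}.Finite) :
    Tendsto l cofinite atTop := by
  refine tendsto_atTop.mpr fun T => ?_
  filter_upwards [(hfin T).compl_mem_cofinite] with i hi
  exact le_of_not_ge hi

end Counting

lemma summable_exp_neg_mul_pow_succ_of_limsup_lt {l : ℕ → ℝ} (hfin : ∀ T, {n | l n ≤ T}.Finite)
    (hbdd : IsBoundedUnder (· ≤ ·) atTop fun T => Real.log ({n | l n ≤ T}.ncard : ℝ) / T)
    {K : ℝ} (hK : 0 < K) (hKl : ∀ n, K ≤ l n) {c : ℝ} (hc : 0 < c)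
    (hlt : limsup (fun T => Real.log ({n | l n ≤ T}.ncard : ℝ) / T) atTop < c) :
    Summable fun p : ℕ × ℕ => Real.exp (-c * l p.1) ^ (p.2 + 1) := by
  obtain ⟨b, hb, hbc⟩ := exists_between (max_lt hlt hc)
  have hmono : Monotone fun T => {n | l n ≤ T}.ncard :=
    fun T T' hTT' => Set.ncard_le_ncard (fun n hn => le_trans hn hTT') (hfin T')
  obtain ⟨C, hC⟩ := exists_le_mul_exp_of_limsup_lt hmono
    ((le_max_right _ _).trans hb.le) hbdd ((le_max_left _ _).trans_lt hb)
  have hsum := summable_exp_neg_mul_of_ncard_le (fun n => hK.le.trans (hKl n)) hfin hbc hc.le hC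
  have hq : Real.exp (-c * K) < 1 :=
    Real.exp_lt_one_iff.mpr (mul_neg_of_neg_of_pos (neg_neg_of_pos hc) hK)
  have hle : ∀ n, Real.exp (-c * l n) ≤ Real.exp (-c * K) := fun n =>
    Real.exp_le_exp.mpr (mul_le_mul_of_nonpos_left (hKl n) (neg_nonpos.mpr hc.le))
  exact summable_prod_pow_succ (x := fun n => Real.exp (-c * l n)) hsum
    (fun n => (Real.exp_pos _).le) (Real.exp_pos _).le hle hq

lemma rpow_le_rpow_add_rpow_neg {r y R : ℝ} (hr : 0 < r) (hy : |y| ≤ R) :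
    r ^ y ≤ r ^ R + r ^ (-R) := by
  obtain ⟨hRy, hyR⟩ := abs_le.mp hy
  rcases le_total 1 r with h1 | h1
  · exact (Real.rpow_le_rpow_of_exponent_le h1 hyR).trans
      (le_add_of_nonneg_right (Real.rpow_nonneg hr.le _))
  · exact (Real.rpow_le_rpow_of_exponent_ge hr h1 hRy).trans
      (le_add_of_nonneg_left (Real.rpow_nonneg hr.le _))

/-- `(δt)^m / m! ≤ e^{δt}` absorbs `t^m`, and the remaining `t^{y-m}` is largest at `t = K`. -/
lemma rpow_mul_exp_neg_mul_le {K t δ y : ℝ} (hK : 0 < K) (hKt : K ≤ t) (hδ : 0 < δ) {m : ℕ}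
    (hm : y ≤ m) : t ^ y * Real.exp (-(δ * t)) ≤ m.factorial / δ ^ m * K ^ (y - m) := by
  have ht : 0 < t := hK.trans_le hKt
  have hsplit : t ^ y = t ^ m * t ^ (y - m) := by
    rw [← Real.rpow_natCast, ← Real.rpow_add ht, add_sub_cancel]
  have hpow : t ^ m * Real.exp (-(δ * t)) ≤ m.factorial / δ ^ m := by
    have := Real.pow_div_factorial_le_exp (δ * t) (by positivity) m
    rw [div_le_iff₀ (by positivity), mul_pow] at this
    rw [Real.exp_neg, ← div_eq_mul_inv, div_le_div_iff₀ (Real.exp_pos _) (by positivity)]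
    linarith
  calc t ^ y * Real.exp (-(δ * t)) = t ^ m * Real.exp (-(δ * t)) * t ^ (y - m) := by
        rw [hsplit]; ring
    _ ≤ m.factorial / δ ^ m * K ^ (y - m) :=
        mul_le_mul hpow (Real.rpow_le_rpow_of_nonpos hK hKt (by linarith))
          (Real.rpow_nonneg ht.le _) (by positivity)

lemma differentiable_tsum_mul_cpow {ι : Type*} {c : ι → ℂ} {r : ι → ℝ} (hr : ∀ i, 0 < r i)
    (hc : ∀ x : ℝ, Summable fun i => ‖c i‖ * r i ^ x) :
    Differentiable ℂ fun z : ℂ => ∑' i, c i * (r i : ℂ) ^ z := by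
  intro z₀
  set R := |z₀.re| + 1
  set U := Complex.re ⁻¹' Set.Ioo (-R) R
  have hU : IsOpen U := isOpen_Ioo.preimage Complex.continuous_re
  have hz₀ : z₀ ∈ U := abs_lt.mp (lt_add_one _)
  refine (Complex.differentiableOn_tsum_of_summable_norm ((hc R).add (hc (-R)))
    (fun i => ?_) hU fun i z hz => ?_).differentiableAt (hU.mem_nhds hz₀)
  · exact ((differentiable_id.const_cpow
      (Or.inl (Complex.ofReal_ne_zero.mpr (hr i).ne'))).const_mul _).differentiableOn
  · rw [norm_mul, Complex.norm_cpow_eq_rpow_re_of_pos (hr i), ← mul_add]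
    exact mul_le_mul_of_nonneg_left
      (rpow_le_rpow_add_rpow_neg (hr i) (abs_le.mpr ⟨hz.1.le, hz.2.le⟩)) (norm_nonneg _)

lemma hasDerivAt_inv_Gamma_mul_zero {F : ℂ → ℂ} (hF : DifferentiableAt ℂ F 0) :
    HasDerivAt (fun z => (Complex.Gamma z)⁻¹ * F z) (F 0) 0 := by
  have hG : HasDerivAt (fun z => (Complex.Gamma z)⁻¹) 1 0 := by
    rw [funext Complex.one_div_Gamma_eq_self_mul_one_div_Gamma_add_one]
    simpa using (hasDerivAt_id (0 : ℂ)).fun_mul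
      ((Complex.differentiable_one_div_Gamma.comp (differentiable_id.add_const 1)) 0).hasDerivAt
  simpa [Complex.Gamma_zero] using hG.fun_mul hF.hasDerivAt

/-- The index `(n, k)` stands for the `(k+1)`-fold iterate of the `n`-th closed orbit. -/
def iterLength (l : ℕ → ℝ) (p : ℕ × ℕ) : ℝ := ((p.2 + 1 : ℕ) : ℝ) * l p.1

noncomputable def orbitCoeff (l : ℕ → ℝ) (ε : ℕ → ℤ) (s : ℂ) (p : ℕ × ℕ) : ℂ :=
  (ε p.1 : ℂ) * l p.1 * Complex.exp (-(((p.2 + 1 : ℕ) : ℂ) * l p.1) * s)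

section OrbitSeries

variable {l : ℕ → ℝ} {ε : ℕ → ℤ} {s : ℂ}

lemma le_iterLength (hl : ∀ n, 0 ≤ l n) (p : ℕ × ℕ) : l p.1 ≤ iterLength l p :=
  le_mul_of_one_le_left (hl _) (by exact_mod_cast Nat.succ_pos p.2)

lemma iterLength_pos (hl : ∀ n, 0 < l n) (p : ℕ × ℕ) : 0 < iterLength l p :=
  mul_pos (by exact_mod_cast Nat.succ_pos p.2) (hl _)

lemma exp_neg_mul_iterLength (b : ℝ) (p : ℕ × ℕ) :
    Real.exp (-b * iterLength l p) = Real.exp (-b * l p.1) ^ (p.2 + 1) := by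
  rw [← Real.exp_nat_mul, iterLength]
  ring_nf

lemma norm_orbitCoeff (hl : ∀ n, 0 ≤ l n) (p : ℕ × ℕ) :
    ‖orbitCoeff l ε s p‖ = ‖(ε p.1 : ℂ)‖ * l p.1 * Real.exp (-(iterLength l p * s.re)) := by
  rw [orbitCoeff, norm_mul, norm_mul, Complex.norm_exp, Complex.norm_real,
    Real.norm_of_nonneg (hl _), iterLength]
  congr 2
  simp [Complex.mul_re]

lemma summable_norm_orbitCoeff_mul_rpow (hε : ∀ n, ‖(ε n : ℂ)‖ ≤ 1) {K : ℝ} (hK : 0 < K)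
    (hKl : ∀ n, K ≤ l n) {b : ℝ} (hbs : b < s.re)
    (hsum : Summable fun p : ℕ × ℕ => Real.exp (-b * l p.1) ^ (p.2 + 1)) (x : ℝ) :
    Summable fun p => ‖orbitCoeff l ε s p‖ * iterLength l p ^ x := by
  have hl : ∀ n, 0 ≤ l n := fun n => hK.le.trans (hKl n)
  have hKr : ∀ p, K ≤ iterLength l p := fun p => (hKl _).trans (le_iterLength hl p)
  set m := ⌈x + 1⌉₊
  refine Summable.of_nonneg_of_le
    (fun p => mul_nonneg (norm_nonneg _) (Real.rpow_nonneg (hK.le.trans (hKr p)) _)) (fun p => ?_)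
    (hsum.mul_left (m.factorial / (s.re - b) ^ m * K ^ (x + 1 - m)))
  set r := iterLength l p
  have hr : 0 < r := hK.trans_le (hKr p)
  have hexp : Real.exp (-(r * s.re)) = Real.exp (-((s.re - b) * r)) * Real.exp (-b * r) := by
    rw [← Real.exp_add]; ring_nf
  rw [norm_orbitCoeff hl, ← exp_neg_mul_iterLength]
  calc ‖(ε p.1 : ℂ)‖ * l p.1 * Real.exp (-(r * s.re)) * r ^ x
      ≤ 1 * r * Real.exp (-(r * s.re)) * r ^ x := by
        gcongr
        · exact hl _
        · exact hε _
        · exact le_iterLength hl p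
    _ = r ^ (x + 1) * Real.exp (-((s.re - b) * r)) * Real.exp (-b * r) := by
        rw [Real.rpow_add_one hr.ne', hexp]
        ring
    _ ≤ m.factorial / (s.re - b) ^ m * K ^ (x + 1 - m) * Real.exp (-b * r) :=
        mul_le_mul_of_nonneg_right
          (rpow_mul_exp_neg_mul_le hK (hKr p) (sub_pos.mpr hbs) (Nat.le_ceil _))
          (Real.exp_pos _).le

lemma orbitCoeff_mul_cpow_neg_one (hl : ∀ n, 0 < l n) (p : ℕ × ℕ) :
    orbitCoeff l ε s p * (iterLength l p : ℂ) ^ ((0 : ℂ) - 1) =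
      (ε p.1 : ℂ) * Complex.exp (-(((p.2 + 1 : ℕ) : ℂ) * l p.1) * s) / ((p.2 + 1 : ℕ) : ℂ) := by
  have : (l p.1 : ℂ) ≠ 0 := Complex.ofReal_ne_zero.mpr (hl _).ne'
  rw [zero_sub, Complex.cpow_neg_one, orbitCoeff, iterLength]
  push_cast
  field_simp

end OrbitSeries

lemma norm_cexp_neg_mul_lt_one {s : ℂ} (hs : 0 < s.re) {t : ℝ} (ht : 0 < t) :
    ‖Complex.exp (-s * t)‖ < 1 := by
  rw [Complex.norm_exp, Real.exp_lt_one_iff]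
  simpa [Complex.mul_re] using mul_pos hs ht

lemma hasSum_mul_neg_log_one_sub_exp {l : ℕ → ℝ} {s : ℂ}
    (hw : ∀ n, ‖Complex.exp (-s * l n)‖ < 1) (a : ℕ → ℂ) (hsum : Summable fun p : ℕ × ℕ =>
      a p.1 * Complex.exp (-(((p.2 + 1 : ℕ) : ℂ) * l p.1) * s) / ((p.2 + 1 : ℕ) : ℂ)) :
    HasSum (fun n => a n * -Complex.log (1 - Complex.exp (-s * l n)))
      (∑' p : ℕ × ℕ, a p.1 * Complex.exp (-(((p.2 + 1 : ℕ) : ℂ) * l p.1) * s) /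
        ((p.2 + 1 : ℕ) : ℂ)) := by
  refine hsum.hasSum.prod_fiberwise fun n => ?_
  refine ((Complex.hasSum_taylorSeries_neg_log' (hw n)).mul_left (a n)).congr_fun fun k => ?_
  rw [← Complex.exp_nat_mul, mul_div_assoc]
  push_cast
  ring_nf

lemma hasProd_one_sub_cpow_neg {w a : ℕ → ℂ} (hw : ∀ n, ‖w n‖ < 1) {D : ℂ}
    (hD : HasSum (fun n => a n * -Complex.log (1 - w n)) D) :
    HasProd (fun n => (1 - w n) ^ (-a n)) (Complex.exp D) := by
  refine hD.cexp.congr_fun fun n => ?_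
  have hne : 1 - w n ≠ 0 := fun h => by
    simpa [(sub_eq_zero.mp h).symm] using hw n
  rw [Complex.cpow_def_of_ne_zero hne, Function.comp_apply]
  ring_nf

/-- Analytic core of Theorem 1.2: with
`A(z) = (1/Γ(z))·Σ_n Σ_{k≥1} ε_n·l_n·e^(-k·l_n·s)·(k·l_n)^(z-1)`, the function `A` is
entire, `A(0) = 0`, `A'(0) = Σ_n Σ_{k≥1} ε_n·e^(-k·l_n·s)/k
= -Σ_n ε_n·Log(1 - e^(-s·l_n))`, and `exp(A'(0)) = ∏_n (1 - e^(-s·l_n))^(-ε_n)`. -/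
theorem regularized_det_equals_zeta (l : ℕ → ℝ) (hl : ∀ n, 0 < l n)
    (ε : ℕ → ℤ) (hε : ∀ n, ε n = 1 ∨ ε n = -1)
    (hfin : ∀ T : ℝ, 0 < T → {n : ℕ | l n ≤ T}.Finite)
    (h : ℝ)
    (hbdd : IsBoundedUnder (· ≤ ·) atTop
      (fun T : ℝ => Real.log ({n : ℕ | l n ≤ T}.ncard : ℝ) / T))
    (hent : limsup (fun T : ℝ => Real.log ({n : ℕ | l n ≤ T}.ncard : ℝ) / T) atTop = h)
    (s : ℂ) (hs : max h 0 < s.re)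
    (A : ℂ → ℂ)
    (hA : A = fun z : ℂ => (Complex.Gamma z)⁻¹ *
      ∑' p : ℕ × ℕ, (ε p.1 : ℂ) * l p.1 * Complex.exp (-(((p.2 + 1 : ℕ) : ℂ) * l p.1) * s) *
        (((((p.2 + 1 : ℕ) : ℝ) * l p.1 : ℝ)) : ℂ) ^ (z - 1))
    (D : ℂ)
    (hD : D = ∑' p : ℕ × ℕ,
      (ε p.1 : ℂ) * Complex.exp (-(((p.2 + 1 : ℕ) : ℂ) * l p.1) * s) / ((p.2 + 1 : ℕ) : ℂ)) :
    (∀ z : ℂ, AnalyticAt ℂ A z) ∧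
    A 0 = 0 ∧
    HasDerivAt A D 0 ∧
    D = -∑' n, (ε n : ℂ) * Complex.log (1 - Complex.exp (-s * l n)) ∧
    Complex.exp D = ∏' n, (1 - Complex.exp (-s * l n)) ^ (-(ε n : ℂ)) := by
  have hfin' : ∀ T, {n | l n ≤ T}.Finite := fun T =>
    (hfin (max T 1) (by positivity)).subset fun n (hn : l n ≤ T) =>
      show l n ≤ max T 1 from hn.trans (le_max_left _ _)
  obtain ⟨n₀, hn₀⟩ := (tendsto_cofinite_atTop_of_finite_sublevel hfin').exists_forall_le
  obtain ⟨b, hb, hbs⟩ := exists_between hs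
  have hcoef := summable_norm_orbitCoeff_mul_rpow (ε := ε)
    (fun n => by rcases hε n with he | he <;> simp [he]) (hl n₀) hn₀ hbs
    (summable_exp_neg_mul_pow_succ_of_limsup_lt hfin' hbdd (hl n₀) hn₀
      ((le_max_right h 0).trans_lt hb) (hent ▸ (le_max_left h 0).trans_lt hb))
  set F : ℂ → ℂ := fun z => ∑' p, orbitCoeff l ε s p * (iterLength l p : ℂ) ^ (z - 1)
  have hF : Differentiable ℂ F :=
    (differentiable_tsum_mul_cpow (iterLength_pos hl) hcoef).comp (differentiable_id.sub_const 1)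
  have hFD : F 0 = D := hD ▸ tsum_congr (orbitCoeff_mul_cpow_neg_one hl)
  have hw : ∀ n, ‖Complex.exp (-s * l n)‖ < 1 :=
    fun n => norm_cexp_neg_mul_lt_one ((le_max_right h 0).trans_lt hs) (hl n)
  have hDlog : HasSum (fun n => (ε n : ℂ) * -Complex.log (1 - Complex.exp (-s * l n))) D := by
    rw [hD]
    refine hasSum_mul_neg_log_one_sub_exp hw (fun n => (ε n : ℂ)) ?_
    refine (Summable.of_norm ?_).congr (orbitCoeff_mul_cpow_neg_one hl)
    simpa [Complex.norm_cpow_eq_rpow_re_of_pos (iterLength_pos hl _)] using hcoef (-1)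
  subst hA
  refine ⟨fun z => (Complex.differentiable_one_div_Gamma.mul hF).analyticAt z,
    by simp [Complex.Gamma_zero], hFD ▸ hasDerivAt_inv_Gamma_mul_zero (hF 0), ?_,
    (hasProd_one_sub_cpow_neg hw hDlog).tprod_eq.symm⟩
  rw [← hDlog.tsum_eq, ← tsum_neg]
  simp only [mul_neg]
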